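/- arXiv:2209.14211 — 2 statements merged into one kernel-verified Lean document; each statement's English description precedes it below -/
import Mathlib

section
/- A G-graded commutative ring R is a Gelfand graded ring if and only if for every graded maximal ideal M of R, the set {P ∈ GSpec(R) : P ⊆ M} is a Zariski closed subset of GSpec(R). -/
section GradedGelfand

variable {G : Type*} [AddGroup G] [DecidableEq G] {R : Type*} [CommRing R]
variable (𝒜 : G → AddSubgroup R) [GradedRing 𝒜]

/-- A homogeneous (graded) prime ideal: a proper graded ideal that is prime
with respect to homogeneous elements. -/
def IsGradedPrime (P : Ideal R) : Prop :=
  P.IsHomogeneous 𝒜 ∧ P ≠ ⊤ ∧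
    ∀ a b : R, SetLike.IsHomogeneousElem 𝒜 a → SetLike.IsHomogeneousElem 𝒜 b →
      a * b ∈ P → a ∈ P ∨ b ∈ P

/-- A graded maximal ideal: a proper graded ideal maximal among proper graded ideals. -/
def IsGradedMaximal (M : Ideal R) : Prop :=
  M.IsHomogeneous 𝒜 ∧ M ≠ ⊤ ∧
    ∀ J : Ideal R, J.IsHomogeneous 𝒜 → M ≤ J → J ≠ ⊤ → J = M

/-- The homogeneous prime spectrum of a graded ring. -/
def GSpec := { P : Ideal R // IsGradedPrime 𝒜 P }

/-- The Zariski topology on the homogeneous prime spectrum, generated by the basic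
open sets `D_G(r)` for homogeneous `r`; the closed sets are exactly the `V_G(I)`
for graded ideals `I`. -/
instance : TopologicalSpace (GSpec 𝒜) :=
  TopologicalSpace.generateFrom
    { U | ∃ r : R, SetLike.IsHomogeneousElem 𝒜 r ∧ U = { P : GSpec 𝒜 | r ∉ P.1 } }

/-- The set of graded maximal ideals inside the homogeneous prime spectrum. -/
def GMax : Set (GSpec 𝒜) := { P | IsGradedMaximal 𝒜 P.1 }

/-- A Gelfand graded ring: every homogeneous prime ideal is contained in a unique
graded maximal ideal. -/
def IsGelfandGraded : Prop :=
  ∀ P : Ideal R, IsGradedPrime 𝒜 P →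
    ∃! M : Ideal R, IsGradedMaximal 𝒜 M ∧ P ≤ M

/-- A pm⁺ graded ring: for every homogeneous prime `P`, the homogeneous primes
containing `P` form a chain. -/
def IsPMPlusGraded : Prop :=
  ∀ P Q Q' : Ideal R, IsGradedPrime 𝒜 P → IsGradedPrime 𝒜 Q → IsGradedPrime 𝒜 Q' →
    P ≤ Q → P ≤ Q' → Q ≤ Q' ∨ Q' ≤ Q

end GradedGelfand

/-!
If every homogeneous prime lies in a unique graded maximal ideal, then two distinct graded maximal
ideals `M ≠ N` are separated by homogeneous `a ∉ M`, `b ∉ N` with `a * b = 0`: otherwise the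
products `a * b` form a multiplicative set missing `0`, and a graded ideal maximal among those
avoiding it is a homogeneous prime below both `M` and `N`. The basic open set `D(b)` then
witnesses that the complement of `{P | P ≤ M}` is open. Conversely, a homogeneous prime `P`
specializes to every graded maximal ideal `N ⊇ P`, so if `{P | P ≤ M}` is closed it
contains `N`, forcing `N = M`.
-/

section HomogeneousIdeal

variable {ι A σ : Type*} [AddMonoid ι] [DecidableEq ι] [Semiring A] [SetLike σ A]
  [AddSubmonoidClass σ A] {𝒜 : ι → σ} [GradedRing 𝒜]

lemma Ideal.IsHomogeneous.le_of_forall_homogeneous_mem {I J : Ideal A} (hI : I.IsHomogeneous 𝒜)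
    (h : ∀ r, SetLike.IsHomogeneousElem 𝒜 r → r ∈ I → r ∈ J) : I ≤ J := by
  rw [← hI.toIdeal_homogeneousCore_eq_self]
  exact Ideal.span_le.2 <| by rintro _ ⟨⟨r, hr⟩, hrI, rfl⟩; exact h r hr hrI

lemma exists_le_maximal_isHomogeneous_disjoint (S : Set A) {I : Ideal A}
    (hI : I.IsHomogeneous 𝒜) (hIS : Disjoint S I) :
    ∃ P, I ≤ P ∧ Maximal (fun J : Ideal A => J.IsHomogeneous 𝒜 ∧ Disjoint S J) P := by
  refine zorn_le_nonempty₀ {J : Ideal A | J.IsHomogeneous 𝒜 ∧ Disjoint S J}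
    (fun c hc hchain J hJ => ⟨sSup c, ⟨?_, ?_⟩, fun _ => le_sSup⟩) I ⟨hI, hIS⟩
  · exact Ideal.IsHomogeneous.sSup fun K hK => (hc hK).1
  · rw [Set.disjoint_right]
    intro s hs
    obtain ⟨K, hKc, hsK⟩ := (Submodule.mem_sSup_of_directed ⟨J, hJ⟩ hchain.directedOn).1 hs
    exact Set.disjoint_right.1 (hc hKc).2 hsK

end HomogeneousIdeal

section GradedSpectrum

variable {G : Type*} [AddGroup G] [DecidableEq G] {R : Type*} [CommRing R]
variable {𝒜 : G → AddSubgroup R} [GradedRing 𝒜]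

lemma isGradedPrime_of_maximal_disjoint {S : Submonoid R} {P : Ideal R}
    (hP : Maximal (fun J : Ideal R => J.IsHomogeneous 𝒜 ∧ Disjoint (S : Set R) J) P) :
    IsGradedPrime 𝒜 P := by
  obtain ⟨⟨hPhom, hPS⟩, hPmax⟩ := hP
  have meets : ∀ a, SetLike.IsHomogeneousElem 𝒜 a → a ∉ P →
      ∃ s ∈ S, s ∈ P ⊔ Ideal.span {a} := by
    intro a ha haP
    by_contra! hdisj
    have hle := hPmax ⟨hPhom.sup (Ideal.homogeneous_span 𝒜 {a} (by simpa using ha)),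
      Set.disjoint_left.2 hdisj⟩ le_sup_left
    exact haP (hle (Ideal.mem_sup_right (Ideal.mem_span_singleton_self a)))
  refine ⟨hPhom, (Ideal.ne_top_iff_one P).2 (Set.disjoint_left.1 hPS S.one_mem),
    fun a b ha hb hab => ?_⟩
  by_contra! ⟨haP, hbP⟩
  obtain ⟨s, hsS, hs⟩ := meets a ha haP
  obtain ⟨t, htS, ht⟩ := meets b hb hbP
  have hprod : (P ⊔ Ideal.span {a}) * (P ⊔ Ideal.span {b}) ≤ P := by
    simp only [Ideal.sup_mul, Ideal.mul_sup, Ideal.span_singleton_mul_span_singleton]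
    exact sup_le (sup_le Ideal.mul_le_right Ideal.mul_le_right)
      (sup_le Ideal.mul_le_left ((Ideal.span_singleton_le_iff_mem P).2 hab))
  exact Set.disjoint_left.1 hPS (S.mul_mem hsS htS) (hprod (Ideal.mul_mem_mul hs ht))

lemma isGradedMaximal_iff_maximal {M : Ideal R} :
    IsGradedMaximal 𝒜 M ↔ Maximal
      (fun J : Ideal R => J.IsHomogeneous 𝒜 ∧ Disjoint ((⊥ : Submonoid R) : Set R) J) M := by
  simp only [Submonoid.coe_bot, Set.disjoint_singleton_left, SetLike.mem_coe,
    ← Ideal.ne_top_iff_one]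
  constructor
  · rintro ⟨hhom, hne, hmax⟩
    exact ⟨⟨hhom, hne⟩, fun J ⟨hJ, hJne⟩ hMJ => (hmax J hJ hMJ hJne).le⟩
  · rintro ⟨⟨hhom, hne⟩, hmax⟩
    exact ⟨hhom, hne, fun J hJ hMJ hJne => le_antisymm (hmax ⟨hJ, hJne⟩ hMJ) hMJ⟩

lemma IsGradedMaximal.isGradedPrime {M : Ideal R} (hM : IsGradedMaximal 𝒜 M) :
    IsGradedPrime 𝒜 M :=
  isGradedPrime_of_maximal_disjoint (isGradedMaximal_iff_maximal.1 hM)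

lemma exists_isGradedMaximal_le {P : Ideal R} (hP : P.IsHomogeneous 𝒜) (hPne : P ≠ ⊤) :
    ∃ M, IsGradedMaximal 𝒜 M ∧ P ≤ M := by
  obtain ⟨M, hPM, hM⟩ :=
    exists_le_maximal_isHomogeneous_disjoint ((⊥ : Submonoid R) : Set R) hP
      (by simpa [← Ideal.ne_top_iff_one] using hPne)
  exact ⟨M, isGradedMaximal_iff_maximal.2 hM, hPM⟩

def IsGradedPrime.homogeneousCompl {P : Ideal R} (hP : IsGradedPrime 𝒜 P) : Submonoid R where
  carrier := {a | SetLike.IsHomogeneousElem 𝒜 a ∧ a ∉ P}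
  one_mem' := ⟨SetLike.isHomogeneousElem_one 𝒜, (Ideal.ne_top_iff_one P).1 hP.2.1⟩
  mul_mem' := fun ⟨ha, haP⟩ ⟨hb, hbP⟩ =>
    ⟨ha.mul hb, fun hab => (hP.2.2 _ _ ha hb hab).elim haP hbP⟩

lemma IsGradedPrime.le_of_disjoint_homogeneousCompl {P Q : Ideal R} (hP : IsGradedPrime 𝒜 P)
    (hQ : Q.IsHomogeneous 𝒜) (hdisj : Disjoint (hP.homogeneousCompl : Set R) Q) : Q ≤ P :=
  hQ.le_of_forall_homogeneous_mem fun _ hr hrQ =>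
    of_not_not fun hrP => Set.disjoint_right.1 hdisj hrQ ⟨hr, hrP⟩

lemma exists_mul_eq_zero_of_isGelfandGraded (hG : IsGelfandGraded 𝒜) {M N : Ideal R}
    (hM : IsGradedMaximal 𝒜 M) (hN : IsGradedMaximal 𝒜 N) (hMN : M ≠ N) :
    ∃ a b, SetLike.IsHomogeneousElem 𝒜 a ∧ SetLike.IsHomogeneousElem 𝒜 b ∧
      a ∉ M ∧ b ∉ N ∧ a * b = 0 := by
  set S := hM.isGradedPrime.homogeneousCompl ⊔ hN.isGradedPrime.homogeneousCompl
  suffices (0 : R) ∈ S by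
    obtain ⟨a, ⟨ha, haM⟩, b, ⟨hb, hbN⟩, hab⟩ := Submonoid.mem_sup.1 this
    exact ⟨a, b, ha, hb, haM, hbN, hab⟩
  by_contra h0
  obtain ⟨P, -, hP⟩ := exists_le_maximal_isHomogeneous_disjoint (S : Set R)
    (Ideal.IsHomogeneous.bot 𝒜) (Set.disjoint_right.2 fun x hx => by
      rwa [(Submodule.mem_bot R).1 hx])
  have hPM : P ≤ M := hM.isGradedPrime.le_of_disjoint_homogeneousCompl hP.1.1
    (hP.1.2.mono_left (SetLike.coe_subset_coe.2 le_sup_left))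
  have hPN : P ≤ N := hN.isGradedPrime.le_of_disjoint_homogeneousCompl hP.1.1
    (hP.1.2.mono_left (SetLike.coe_subset_coe.2 le_sup_right))
  obtain ⟨K, -, hK⟩ := hG P (isGradedPrime_of_maximal_disjoint hP)
  exact hMN ((hK M ⟨hM, hPM⟩).trans (hK N ⟨hN, hPN⟩).symm)

namespace GSpec

lemma isOpen_basicOpen {r : R} (hr : SetLike.IsHomogeneousElem 𝒜 r) :
    IsOpen {P : GSpec 𝒜 | r ∉ P.1} :=
  TopologicalSpace.isOpen_generateFrom_of_mem ⟨r, hr, rfl⟩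

lemma specializes_of_le {P Q : GSpec 𝒜} (h : P.1 ≤ Q.1) : P ⤳ Q := by
  rw [specializes_iff_nhds, TopologicalSpace.nhds_generateFrom, TopologicalSpace.nhds_generateFrom]
  refine le_iInf₂ fun U ⟨hQU, hU⟩ => iInf₂_le U ⟨?_, hU⟩
  obtain ⟨r, -, rfl⟩ := hU
  exact fun hrP => hQU (h hrP)

end GSpec

end GradedSpectrum

section Statements

variable {G : Type*} [AddGroup G] [DecidableEq G] {R : Type*} [CommRing R]
variable (𝒜 : G → AddSubgroup R) [GradedRing 𝒜]

theorem stmt_4 : IsGelfandGraded 𝒜 ↔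
    ∀ M : Ideal R, IsGradedMaximal 𝒜 M → IsClosed { P : GSpec 𝒜 | P.1 ≤ M } := by
  constructor
  · intro hG M hM
    rw [← isOpen_compl_iff, isOpen_iff_forall_mem_open]
    intro Q hQM
    obtain ⟨N, ⟨hN, hQN⟩, -⟩ := hG Q.1 Q.2
    obtain ⟨a, b, ha, hb, haM, hbN, hab⟩ :=
      exists_mul_eq_zero_of_isGelfandGraded hG hM hN fun hMN => hQM (hMN ▸ hQN)
    refine ⟨{P | b ∉ P.1}, fun P hbP hPM => haM (hPM ?_), GSpec.isOpen_basicOpen hb,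
      fun hbQ => hbN (hQN hbQ)⟩
    exact (P.2.2.2 a b ha hb (hab ▸ P.1.zero_mem)).resolve_right hbP
  · intro hclosed P hP
    obtain ⟨M, hM, hPM⟩ := exists_isGradedMaximal_le hP.1 hP.2.1
    refine ⟨M, ⟨hM, hPM⟩, fun N ⟨hN, hPN⟩ => ?_⟩
    have hNM : N ≤ M :=
      (GSpec.specializes_of_le (P := ⟨P, hP⟩) (Q := ⟨N, hN.isGradedPrime⟩) hPN).mem_closed
        (hclosed M hM) hPM
    exact (hN.2.2 M hM.1 hNM hM.2.1).symm
end Statements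
end

section
/- A G-graded commutative ring R is a Gelfand graded ring if and only if for every a ∈ R_e there exist b, c ∈ R_e such that (1 − ba)(1 − c(1 − a)) = 0. -/
/-
Two distinct graded maximal ideals M, N are comaximal, and since both are homogeneous the
decomposition 1 = a + (1 - a) with a ∈ N, 1 - a ∈ M can be taken in degree e. If
(1 - ba)(1 - c(1 - a)) = 0, then a homogeneous prime P below both M and N contains one of the
two degree-e factors, which puts 1 in N or in M; so P has only one graded maximal ideal above it.

Conversely, if the identity fails for some a ∈ R_e, the products (1 - ba)(1 - c(1 - a)) form a
multiplicative set avoiding 0. The homogeneous core of a prime disjoint from it is a homogeneous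
prime P for which P + (a) and P + (1 - a) are proper (reading 1 = p + ra off in degree e), so
they lie in graded maximal ideals, which cannot coincide because they contain a and 1 - a.
-/

open DirectSum HomogeneousIdeal

theorem Ideal.one_sub_mul_notMem {R : Type*} [CommRing R] {I : Ideal R} (hI : I ≠ ⊤) {x : R}
    (hx : x ∈ I) (r : R) : 1 - r * x ∉ I := fun h =>
  hI ((Ideal.eq_top_iff_one I).2 (by simpa using I.add_mem h (I.mul_mem_left r hx)))

section Graded

variable {ι R : Type*} [DecidableEq ι] [AddMonoid ι] [CommRing R]
variable (𝒜 : ι → AddSubgroup R) [GradedRing 𝒜]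

instance HomogeneousIdeal.isCoatomic : IsCoatomic (HomogeneousIdeal 𝒜) := by
  refine CompleteLattice.coatomic_of_top_compact ?_
  rw [CompleteLattice.isCompactElement_iff_le_of_directed_sSup_le]
  intro s hs hdir htop
  obtain ⟨_, ⟨I, hI, rfl⟩, hle⟩ :=
    (CompleteLattice.isCompactElement_iff_le_of_directed_sSup_le (α := Ideal R) ⊤).1
      Ideal.isCompactElement_top (toIdeal '' s) (hs.image _)
      (directedOn_image.2 (hdir.mono fun _ _ h => h))
      (by rw [sSup_image, ← toIdeal_sSup, ← toIdeal_top (𝒜 := 𝒜)]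
          exact toIdeal_le_toIdeal_iff.2 htop)
  exact ⟨I, hI, by simpa using hle⟩

def oneSubMulSubmonoid (x : 𝒜 0) : Submonoid R where
  carrier := {y | ∃ r ∈ 𝒜 0, 1 - r * x = y}
  one_mem' := ⟨0, zero_mem _, by ring⟩
  mul_mem' := by
    rintro _ _ ⟨r, hr, rfl⟩ ⟨s, hs, rfl⟩
    refine ⟨r + s - r * s * x, ?_, by ring⟩
    exact (sub_mem (add_mem hr hs) (mul_mem (mul_mem hr hs) x.2) :
      _ ∈ SetLike.GradeZero.subring 𝒜)

variable {𝒜}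

theorem SetLike.isHomogeneousElem_one_sub_mul {r x : R} (hr : r ∈ 𝒜 0) (hx : x ∈ 𝒜 0) :
    SetLike.IsHomogeneousElem 𝒜 (1 - r * x) :=
  ⟨0, (sub_mem (one_mem _) (mul_mem hr hx) : _ ∈ SetLike.GradeZero.subring 𝒜)⟩

theorem Ideal.isHomogeneous_span_singleton {x : R} (hx : SetLike.IsHomogeneousElem 𝒜 x) :
    (Ideal.span {x}).IsHomogeneous 𝒜 :=
  Ideal.homogeneous_span 𝒜 _ (by rintro _ rfl; exact hx)

theorem Ideal.IsHomogeneous.exists_mem_one_sub_mem_of_sup_eq_top {I J : Ideal R}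
    (hI : I.IsHomogeneous 𝒜) (hJ : J.IsHomogeneous 𝒜) (h : I ⊔ J = ⊤) :
    ∃ a ∈ 𝒜 0, a ∈ I ∧ 1 - a ∈ J := by
  obtain ⟨i, hi, j, hj, hij⟩ := Submodule.mem_sup.1 (h ▸ Submodule.mem_top : (1 : R) ∈ I ⊔ J)
  refine ⟨decompose 𝒜 i 0, SetLike.coe_mem _, hI 0 hi, ?_⟩
  have h1 : (decompose 𝒜 i 0 : R) + decompose 𝒜 j 0 = 1 := by
    rw [← AddMemClass.coe_add, ← DFinsupp.add_apply, ← decompose_add, hij,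
      decompose_of_mem_same 𝒜 (SetLike.one_mem_graded 𝒜)]
  rw [← h1, add_sub_cancel_left]
  exact hJ 0 hj

theorem Ideal.IsHomogeneous.exists_one_sub_mul_mem_of_sup_span_eq_top {I : Ideal R} {x : R}
    (hI : I.IsHomogeneous 𝒜) (hx : x ∈ 𝒜 0) (h : I ⊔ Ideal.span {x} = ⊤) :
    ∃ r ∈ 𝒜 0, 1 - r * x ∈ I := by
  obtain ⟨a, ha, haI, hax⟩ := hI.exists_mem_one_sub_mem_of_sup_eq_top
    (Ideal.isHomogeneous_span_singleton ⟨0, hx⟩) h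
  obtain ⟨r, hr⟩ := Ideal.mem_span_singleton'.1 hax
  refine ⟨decompose 𝒜 r 0, SetLike.coe_mem _, ?_⟩
  have hr0 : (decompose 𝒜 r 0 : R) * x = 1 - a := by
    rw [← coe_decompose_mul_of_right_mem_zero 𝒜 hx, hr,
      decompose_of_mem_same 𝒜 (sub_mem (SetLike.one_mem_graded 𝒜) ha)]
  rwa [hr0, sub_sub_cancel]

end Graded

section Gelfand

variable {G R : Type*} [AddGroup G] [DecidableEq G] [CommRing R]
variable {𝒜 : G → AddSubgroup R} [GradedRing 𝒜]

theorem Ideal.IsHomogeneous.exists_isGradedMaximal_le {I : Ideal R} (hI : I.IsHomogeneous 𝒜)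
    (hI' : I ≠ ⊤) : ∃ M, IsGradedMaximal 𝒜 M ∧ I ≤ M := by
  obtain ⟨M, hM, hIM⟩ := (eq_top_or_exists_le_coatom (⟨I, hI⟩ : HomogeneousIdeal 𝒜)).resolve_left
    fun h => hI' (congrArg toIdeal h)
  refine ⟨toIdeal M, ⟨M.isHomogeneous, fun h => hM.1 (toIdeal_injective h), ?_⟩, hIM⟩
  intro J hJ hMJ hJ'
  have := (hM.le_iff (x := ⟨J, hJ⟩)).1 hMJ
  exact congrArg toIdeal (this.resolve_left fun h => hJ' (congrArg toIdeal h))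

theorem IsGradedMaximal.sup_eq_top_of_ne {M N : Ideal R} (hM : IsGradedMaximal 𝒜 M)
    (hN : IsGradedMaximal 𝒜 N) (hMN : M ≠ N) : M ⊔ N = ⊤ := by
  by_contra h
  have hsupM := hM.2.2 _ (hM.1.sup hN.1) le_sup_left h
  have hsupN := hN.2.2 _ (hM.1.sup hN.1) le_sup_right h
  exact hMN (hsupM.symm.trans hsupN)

theorem Ideal.IsPrime.isGradedPrime_homogeneousCore {P : Ideal R} (hP : P.IsPrime) :
    IsGradedPrime 𝒜 (P.homogeneousCore 𝒜).toIdeal :=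
  ⟨(P.homogeneousCore 𝒜).isHomogeneous,
    ne_top_of_le_ne_top hP.ne_top (P.toIdeal_homogeneousCore_le 𝒜),
    fun _ _ ha hb hab => (hP.mem_or_mem (P.toIdeal_homogeneousCore_le 𝒜 hab)).imp
      (Ideal.mem_homogeneousCore_of_homogeneous_of_mem ha)
      (Ideal.mem_homogeneousCore_of_homogeneous_of_mem hb)⟩

variable (𝒜) in
theorem exists_isGradedPrime_disjoint {S : Submonoid R} (hS : (0 : R) ∉ S) :
    ∃ P, IsGradedPrime 𝒜 P ∧ Disjoint (P : Set R) S := by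
  obtain ⟨P, hP, -, hPS⟩ := Ideal.exists_le_prime_disjoint ⊥ S (by simpa using hS)
  exact ⟨_, hP.isGradedPrime_homogeneousCore, hPS.mono_left (P.toIdeal_homogeneousCore_le 𝒜)⟩

theorem Ideal.IsHomogeneous.exists_isGradedMaximal_le_mem {I : Ideal R} (hI : I.IsHomogeneous 𝒜)
    (x : 𝒜 0) (hIx : Disjoint (I : Set R) (oneSubMulSubmonoid 𝒜 x)) :
    ∃ M, IsGradedMaximal 𝒜 M ∧ I ≤ M ∧ (x : R) ∈ M := by
  have hsup : I ⊔ Ideal.span {(x : R)} ≠ ⊤ := fun h => by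
    obtain ⟨r, hr, hrI⟩ := hI.exists_one_sub_mul_mem_of_sup_span_eq_top x.2 h
    exact hIx.ne_of_mem hrI ⟨r, hr, rfl⟩ rfl
  obtain ⟨M, hM, hIM⟩ :=
    (hI.sup (Ideal.isHomogeneous_span_singleton ⟨0, x.2⟩)).exists_isGradedMaximal_le hsup
  exact ⟨M, hM, le_sup_left.trans hIM, hIM (Ideal.mem_sup_right (Ideal.mem_span_singleton_self _))⟩

end Gelfand

section Statements

variable {G : Type*} [AddGroup G] [DecidableEq G] {R : Type*} [CommRing R]
variable (𝒜 : G → AddSubgroup R) [GradedRing 𝒜]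

theorem stmt_11 : IsGelfandGraded 𝒜 ↔
    ∀ a : R, a ∈ 𝒜 0 → ∃ b c : R, b ∈ 𝒜 0 ∧ c ∈ 𝒜 0 ∧
      (1 - b * a) * (1 - c * (1 - a)) = 0 := by
  constructor
  · intro hGel a ha
    set x : 𝒜 0 := ⟨a, ha⟩
    by_contra! hS
    have hS0 : (0 : R) ∉ oneSubMulSubmonoid 𝒜 x ⊔ oneSubMulSubmonoid 𝒜 (1 - x) := by
      intro h
      obtain ⟨_, ⟨b, hb, rfl⟩, _, ⟨c, hc, rfl⟩, hbc⟩ := Submonoid.mem_sup.1 h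
      exact hS b c hb hc hbc
    obtain ⟨P, hP, hPS⟩ := exists_isGradedPrime_disjoint 𝒜 hS0
    obtain ⟨M, hM, hPM, haM⟩ :=
      hP.1.exists_isGradedMaximal_le_mem x (hPS.mono_right (SetLike.coe_mono le_sup_left))
    obtain ⟨N, hN, hPN, haN⟩ :=
      hP.1.exists_isGradedMaximal_le_mem (1 - x) (hPS.mono_right (SetLike.coe_mono le_sup_right))
    have hMN : M = N := (hGel P hP).unique ⟨hM, hPM⟩ ⟨hN, hPN⟩
    exact Ideal.one_sub_mul_notMem hM.2.1 haM 1 (by simpa [hMN] using haN)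
  · intro h P hP
    obtain ⟨M, hM, hPM⟩ := hP.1.exists_isGradedMaximal_le hP.2.1
    refine ⟨M, ⟨hM, hPM⟩, fun N ⟨hN, hPN⟩ => ?_⟩
    by_contra hNM
    obtain ⟨a, ha, haN, haM⟩ :=
      hN.1.exists_mem_one_sub_mem_of_sup_eq_top hM.1 (hN.sup_eq_top_of_ne hM hNM)
    obtain ⟨b, c, hb, hc, hbc⟩ := h a ha
    rcases hP.2.2 _ _ (SetLike.isHomogeneousElem_one_sub_mul hb ha)
      (SetLike.isHomogeneousElem_one_sub_mul hc (sub_mem (SetLike.one_mem_graded 𝒜) ha))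
      (hbc ▸ P.zero_mem) with hba | hca
    · exact Ideal.one_sub_mul_notMem hN.2.1 haN b (hPN hba)
    · exact Ideal.one_sub_mul_notMem hM.2.1 haM c (hPM hca)

end Statements
end
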